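/- Let A be a symmetric Frobenius algebra in a sovereign tensor category C such that m ∘ Δ = id_A. Then A is a non-degenerate algebra, i.e. the morphism Φ_A : A → A^∨ is invertible. -/

import Mathlib

/-!
Common framework for formalizing Kong–Runkel, "Morita classes of algebras in
modular tensor categories" (arXiv:0708.1897).

We set up: sovereign tensor categories (two-sided duality data agreeing on
objects and morphisms), algebras (= monoid objects `Mon_ C`), the trace
pairing `Φ_A` and non-degeneracy, the canonical Frobenius structure of a
non-degenerate algebra, and (symmetric, special, commutative, haploid)
Frobenius properties.
-/

open CategoryTheory MonoidalCategory Limits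

universe v u

namespace KR

variable {C : Type u} [Category.{v} C] [MonoidalCategory C]

/-- A sovereign structure on a monoidal category: each object `X` has a two-sided
dual `dual X`, with evaluation/coevaluation `ev X : dual X ⊗ X ⟶ 𝟙`, `coev X : 𝟙 ⟶ X ⊗ dual X`
(making `dual X` a right dual) and `ev' X : X ⊗ dual X ⟶ 𝟙`, `coev' X : 𝟙 ⟶ dual X ⊗ X`
(making `dual X` a left dual), such that the two induced transposes of any morphism agree. -/
structure Sovereign (C : Type u) [Category.{v} C] [MonoidalCategory C] where
  dual : C → C
  ev : ∀ X : C, dual X ⊗ X ⟶ 𝟙_ C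
  coev : ∀ X : C, 𝟙_ C ⟶ X ⊗ dual X
  ev' : ∀ X : C, X ⊗ dual X ⟶ 𝟙_ C
  coev' : ∀ X : C, 𝟙_ C ⟶ dual X ⊗ X
  zig : ∀ X : C, (λ_ X).inv ≫ (coev X ▷ X) ≫ (α_ X (dual X) X).hom ≫ (X ◁ ev X) ≫ (ρ_ X).hom = 𝟙 X
  zag : ∀ X : C, (ρ_ (dual X)).inv ≫ (dual X ◁ coev X) ≫ (α_ (dual X) X (dual X)).inv ≫
      (ev X ▷ dual X) ≫ (λ_ (dual X)).hom = 𝟙 (dual X)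
  zig' : ∀ X : C, (ρ_ X).inv ≫ (X ◁ coev' X) ≫ (α_ X (dual X) X).inv ≫ (ev' X ▷ X) ≫
      (λ_ X).hom = 𝟙 X
  zag' : ∀ X : C, (λ_ (dual X)).inv ≫ (coev' X ▷ dual X) ≫ (α_ (dual X) X (dual X)).hom ≫
      (dual X ◁ ev' X) ≫ (ρ_ (dual X)).hom = 𝟙 (dual X)
  /-- Sovereignty: the right-duality transpose of any morphism agrees with its
  left-duality transpose. -/
  sovereign : ∀ {X Y : C} (f : X ⟶ Y),
    (ρ_ (dual Y)).inv ≫ (dual Y ◁ coev X) ≫ (dual Y ◁ (f ▷ dual X)) ≫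
        (α_ (dual Y) Y (dual X)).inv ≫ (ev Y ▷ dual X) ≫ (λ_ (dual X)).hom
      = (λ_ (dual Y)).inv ≫ (coev' X ▷ dual Y) ≫ ((dual X ◁ f) ▷ dual Y) ≫
        (α_ (dual X) Y (dual Y)).hom ≫ (dual X ◁ ev' Y) ≫ (ρ_ (dual X)).hom

namespace Sovereign

variable (S : Sovereign C)

/-- The dual (transpose) of a morphism. -/
def dualHom {X Y : C} (f : X ⟶ Y) : S.dual Y ⟶ S.dual X :=
  (ρ_ (S.dual Y)).inv ≫ (S.dual Y ◁ S.coev X) ≫ (S.dual Y ◁ (f ▷ S.dual X)) ≫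
    (α_ (S.dual Y) Y (S.dual X)).inv ≫ (S.ev Y ▷ S.dual X) ≫ (λ_ (S.dual X)).hom

/-- Left trace of an endomorphism. -/
def trL {X : C} (f : X ⟶ X) : 𝟙_ C ⟶ 𝟙_ C :=
  S.coev' X ≫ (S.dual X ◁ f) ≫ S.ev X

/-- Right trace of an endomorphism. -/
def trR {X : C} (f : X ⟶ X) : 𝟙_ C ⟶ 𝟙_ C :=
  S.coev X ≫ (f ▷ S.dual X) ≫ S.ev' X

/-- Left dimension of an object, as an endomorphism of the tensor unit. -/
def dimL (X : C) : 𝟙_ C ⟶ 𝟙_ C := S.trL (𝟙 X)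

/-- Right dimension of an object, as an endomorphism of the tensor unit. -/
def dimR (X : C) : 𝟙_ C ⟶ 𝟙_ C := S.trR (𝟙 X)

end Sovereign

variable (S : Sovereign C)

/-- The trace pairing `π = d̃_A ∘ ((m ∘ (m ⊗ id)) ⊗ id_{A^∨}) ∘ (id_{A ⊗ A} ⊗ b_A)` of an
algebra `A`. -/
def pairing (A : Mon C) : A.X ⊗ A.X ⟶ 𝟙_ C :=
  (ρ_ (A.X ⊗ A.X)).inv ≫ ((A.X ⊗ A.X) ◁ S.coev A.X) ≫ (α_ (A.X ⊗ A.X) A.X (S.dual A.X)).inv ≫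
    (((MonObj.mul (X := A.X) ▷ A.X) ≫ MonObj.mul (X := A.X)) ▷ S.dual A.X) ≫ S.ev' A.X

/-- The morphism `Φ_A = (π ⊗ id_{A^∨}) ∘ (id_A ⊗ b_A) : A ⟶ A^∨` induced by the trace pairing. -/
def Phi (A : Mon C) : A.X ⟶ S.dual A.X :=
  (ρ_ A.X).inv ≫ (A.X ◁ S.coev A.X) ≫ (α_ A.X A.X (S.dual A.X)).inv ≫
    (pairing S A ▷ S.dual A.X) ≫ (λ_ (S.dual A.X)).hom

/-- An algebra is non-degenerate iff `Φ_A` is invertible. -/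
def Nondegenerate (A : Mon C) : Prop := IsIso (Phi S A)

/-- The canonical coproduct `Δ = (g ⊗ m) ∘ (b̃_A ⊗ id_A)` of an algebra, where `g` is
(meant to be) the inverse of `Φ_A`. -/
def canComulAux (A : Mon C) (g : S.dual A.X ⟶ A.X) : A.X ⟶ A.X ⊗ A.X :=
  (λ_ A.X).inv ≫ ((S.coev' A.X ≫ (g ▷ A.X)) ▷ A.X) ≫ (α_ A.X A.X A.X).hom ≫ (A.X ◁ MonObj.mul (X := A.X))

/-- The canonical counit `ε = η^∨ ∘ Φ_A` of a non-degenerate algebra. -/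
def canCounit (A : Mon C) : A.X ⟶ 𝟙_ C :=
  Phi S A ≫ (ρ_ (S.dual A.X)).inv ≫ (S.dual A.X ◁ MonObj.one (X := A.X)) ≫ S.ev A.X

/-- Coalgebra laws for a comultiplication/counit pair. -/
def IsCoalgebra (X : C) (Δ : X ⟶ X ⊗ X) (ε : X ⟶ 𝟙_ C) : Prop :=
  (Δ ≫ (Δ ▷ X) ≫ (α_ X X X).hom = Δ ≫ (X ◁ Δ)) ∧
  (Δ ≫ (ε ▷ X) ≫ (λ_ X).hom = 𝟙 X) ∧
  (Δ ≫ (X ◁ ε) ≫ (ρ_ X).hom = 𝟙 X)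

/-- The Frobenius property: `(id ⊗ m) ∘ (Δ ⊗ id) = Δ ∘ m = (m ⊗ id) ∘ (id ⊗ Δ)`,
together with the (co)algebra laws. -/
def IsFrobenius (A : Mon C) (Δ : A.X ⟶ A.X ⊗ A.X) (ε : A.X ⟶ 𝟙_ C) : Prop :=
  IsCoalgebra A.X Δ ε ∧
  ((Δ ▷ A.X) ≫ (α_ A.X A.X A.X).hom ≫ (A.X ◁ MonObj.mul (X := A.X)) = MonObj.mul (X := A.X) ≫ Δ) ∧
  ((A.X ◁ Δ) ≫ (α_ A.X A.X A.X).inv ≫ (MonObj.mul (X := A.X) ▷ A.X) = MonObj.mul (X := A.X) ≫ Δ)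

/-- A Frobenius algebra is symmetric iff the two canonical morphisms `A ⟶ A^∨`
built from `ε ∘ m` and the right resp. left duality coincide. -/
def IsSymmetric (A : Mon C) (ε : A.X ⟶ 𝟙_ C) : Prop :=
  (ρ_ A.X).inv ≫ (A.X ◁ S.coev A.X) ≫ (α_ A.X A.X (S.dual A.X)).inv ≫
      ((MonObj.mul (X := A.X) ≫ ε) ▷ S.dual A.X) ≫ (λ_ (S.dual A.X)).hom
  = (λ_ A.X).inv ≫ (S.coev' A.X ▷ A.X) ≫ (α_ (S.dual A.X) A.X A.X).hom ≫
      (S.dual A.X ◁ (MonObj.mul (X := A.X) ≫ ε)) ≫ (ρ_ (S.dual A.X)).hom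

end KR


/-!
Write `e = Δ ∘ η : 𝟙 ⟶ A ⊗ A` and `p = ε ∘ m : A ⊗ A ⟶ 𝟙`. The Frobenius and (co)unit laws make
`(e, p)` a duality exhibiting `A` as its own dual, so the transpose `Φ = (p ⊗ id) ∘ (id ⊗ b_A)`
of `p` is invertible by uniqueness of duals. It remains to see that the trace pairing is `p`.
Symmetry lets `Φ` be slid along the left duality as well, which shows that `Φ` carries `(e, p)`
to `(b_A, d̃_A)`; hence the trace of left multiplication may be computed with `(e, p)`, giving
`a ↦ ε(a · m(e)) = ε(a)` because `m ∘ Δ = id`.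
-/

namespace KR
open CategoryTheory MonoidalCategory MonObj

variable {C : Type u} [Category.{v} C] [MonoidalCategory C]

section Snake

/-- The zigzags through a cup `u` and a cap `v`, bent to the left resp. to the right; the
snake identities of a duality say that both are identities. -/
def snakeL {P Q R : C} (u : 𝟙_ C ⟶ P ⊗ Q) (v : Q ⊗ R ⟶ 𝟙_ C) : R ⟶ P :=
  (λ_ R).inv ≫ (u ▷ R) ≫ (α_ P Q R).hom ≫ (P ◁ v) ≫ (ρ_ P).hom

def snakeR {P Q R : C} (u : 𝟙_ C ⟶ P ⊗ Q) (v : R ⊗ P ⟶ 𝟙_ C) : R ⟶ Q :=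
  (ρ_ R).inv ≫ (R ◁ u) ≫ (α_ R P Q).inv ≫ (v ▷ Q) ≫ (λ_ Q).hom

lemma snakeR_whiskerRight_comp {P Q R P' : C} (u : 𝟙_ C ⟶ P ⊗ Q) (v : R ⊗ P ⟶ 𝟙_ C)
    (v' : Q ⊗ P' ⟶ 𝟙_ C) : (snakeR u v ▷ P') ≫ v' = (R ◁ snakeL u v') ≫ v := by
  calc (snakeR u v ▷ P') ≫ v'
      = ((ρ_ R).inv ▷ P') ≫ ((R ◁ u) ▷ P') ≫ ((α_ R P Q).inv ▷ P') ≫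
        (α_ (R ⊗ P) Q P').hom ≫ (v ▷ (Q ⊗ P')) ≫ (𝟙_ C ◁ v') ≫ (λ_ (𝟙_ C)).hom := by
        simp only [snakeR, comp_whiskerRight, Category.assoc]; monoidal
    _ = ((ρ_ R).inv ▷ P') ≫ ((R ◁ u) ▷ P') ≫ ((α_ R P Q).inv ▷ P') ≫
        (α_ (R ⊗ P) Q P').hom ≫ ((R ⊗ P) ◁ v') ≫ (v ▷ 𝟙_ C) ≫ (λ_ (𝟙_ C)).hom := by
        rw [← whisker_exchange_assoc]
    _ = (R ◁ snakeL u v') ≫ v := by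
        simp only [snakeL, MonoidalCategory.whiskerLeft_comp, Category.assoc]; monoidal

lemma comp_whiskerLeft_snakeR {P Q P' Q' : C} (u : 𝟙_ C ⟶ P ⊗ Q) (u' : 𝟙_ C ⟶ P' ⊗ Q')
    (v' : Q ⊗ P' ⟶ 𝟙_ C) : u ≫ (P ◁ snakeR u' v') = u' ≫ (snakeL u v' ▷ Q') := by
  calc u ≫ (P ◁ snakeR u' v')
      = (ρ_ (𝟙_ C)).inv ≫ (u ▷ 𝟙_ C) ≫ ((P ⊗ Q) ◁ u') ≫ (α_ P Q (P' ⊗ Q')).hom ≫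
        (P ◁ (α_ Q P' Q').inv) ≫ (P ◁ (v' ▷ Q')) ≫ (P ◁ (λ_ Q').hom) := by
        simp only [snakeR, MonoidalCategory.whiskerLeft_comp]; monoidal
    _ = (ρ_ (𝟙_ C)).inv ≫ (𝟙_ C ◁ u') ≫ (u ▷ (P' ⊗ Q')) ≫ (α_ P Q (P' ⊗ Q')).hom ≫
        (P ◁ (α_ Q P' Q').inv) ≫ (P ◁ (v' ▷ Q')) ≫ (P ◁ (λ_ Q').hom) := by
        rw [whisker_exchange_assoc]
    _ = u' ≫ (snakeL u v' ▷ Q') := by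
        simp only [snakeL, comp_whiskerRight]; monoidal

lemma comp_snakeR {P' Q' R Q : C} (f : R ⟶ Q) (u' : 𝟙_ C ⟶ P' ⊗ Q')
    (v' : Q ⊗ P' ⟶ 𝟙_ C) : f ≫ snakeR u' v' = snakeR u' ((f ▷ P') ≫ v') := by
  calc f ≫ snakeR u' v'
      = (ρ_ R).inv ≫ (f ▷ 𝟙_ C) ≫ (Q ◁ u') ≫ (α_ Q P' Q').inv ≫ (v' ▷ Q') ≫
        (λ_ Q').hom := by
        simp only [snakeR]; monoidal
    _ = (ρ_ R).inv ≫ (R ◁ u') ≫ (f ▷ (P' ⊗ Q')) ≫ (α_ Q P' Q').inv ≫ (v' ▷ Q') ≫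
        (λ_ Q').hom := by
        rw [← whisker_exchange_assoc]
    _ = snakeR u' ((f ▷ P') ≫ v') := by
        simp only [snakeR, comp_whiskerRight, Category.assoc]; monoidal

lemma snakeR_comp_snakeR {P Q R P' Q' : C} (u : 𝟙_ C ⟶ P ⊗ Q) (v : R ⊗ P ⟶ 𝟙_ C)
    (u' : 𝟙_ C ⟶ P' ⊗ Q') (v' : Q ⊗ P' ⟶ 𝟙_ C) :
    snakeR u v ≫ snakeR u' v' = snakeR u' ((R ◁ snakeL u v') ≫ v) := by
  rw [comp_snakeR, snakeR_whiskerRight_comp]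

/-- Uniqueness of duals: two dualities `(u, v)` and `(u', v')` on `X` give `Z ≅ Y`. -/
lemma isIso_snakeR {X Y Z : C} {u : 𝟙_ C ⟶ X ⊗ Y} {v : Y ⊗ X ⟶ 𝟙_ C}
    {u' : 𝟙_ C ⟶ X ⊗ Z} {v' : Z ⊗ X ⟶ 𝟙_ C} (hL : snakeL u v = 𝟙 X) (hR : snakeR u v = 𝟙 Y)
    (hL' : snakeL u' v' = 𝟙 X) (hR' : snakeR u' v' = 𝟙 Z) : IsIso (snakeR u v') :=
  ⟨snakeR u' v, by rw [snakeR_comp_snakeR, hL, whiskerLeft_id, Category.id_comp, hR'],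
    by rw [snakeR_comp_snakeR, hL', whiskerLeft_id, Category.id_comp, hR]⟩

end Snake

variable {A : Mon C} {Δ : A.X ⟶ A.X ⊗ A.X} {ε : A.X ⟶ 𝟙_ C}

lemma IsFrobenius.snakeL_eq_id (hFrob : IsFrobenius A Δ ε) :
    snakeL (η ≫ Δ) (μ ≫ ε) = 𝟙 A.X := by
  simp only [snakeL, comp_whiskerRight, MonoidalCategory.whiskerLeft_comp, Category.assoc]
  slice_lhs 3 5 => rw [hFrob.2.1]
  slice_lhs 2 3 => rw [MonObj.one_mul]
  simpa only [Category.assoc, Iso.inv_hom_id_assoc] using hFrob.1.2.2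

lemma IsFrobenius.snakeR_eq_id (hFrob : IsFrobenius A Δ ε) :
    snakeR (η ≫ Δ) (μ ≫ ε) = 𝟙 A.X := by
  simp only [snakeR, comp_whiskerRight, MonoidalCategory.whiskerLeft_comp, Category.assoc]
  slice_lhs 3 5 => rw [hFrob.2.2]
  slice_lhs 2 3 => rw [MonObj.mul_one]
  simpa only [Category.assoc, Iso.inv_hom_id_assoc] using hFrob.1.2.1

variable (S : Sovereign C)

lemma Phi_eq_snakeR (A : Mon C) : Phi S A = snakeR (S.coev A.X) (pairing S A) := rfl

/-- The right trace of left multiplication, `a ↦ tr(x ↦ a x)`. -/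
def leftMulTrace (A : Mon C) : A.X ⟶ 𝟙_ C :=
  (ρ_ A.X).inv ≫ (A.X ◁ S.coev A.X) ≫ (α_ A.X A.X (S.dual A.X)).inv ≫
    (μ ▷ S.dual A.X) ≫ S.ev' A.X

lemma pairing_eq_mul_comp_leftMulTrace (A : Mon C) : pairing S A = μ ≫ leftMulTrace S A := by
  calc pairing S A
      = (ρ_ (A.X ⊗ A.X)).inv ≫ ((A.X ⊗ A.X) ◁ S.coev A.X) ≫ (μ ▷ (A.X ⊗ S.dual A.X)) ≫
        (α_ A.X A.X (S.dual A.X)).inv ≫ (μ ▷ S.dual A.X) ≫ S.ev' A.X := by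
        simp only [pairing, comp_whiskerRight, Category.assoc]; monoidal
    _ = (ρ_ (A.X ⊗ A.X)).inv ≫ (μ ▷ 𝟙_ C) ≫ (A.X ◁ S.coev A.X) ≫
        (α_ A.X A.X (S.dual A.X)).inv ≫ (μ ▷ S.dual A.X) ≫ S.ev' A.X := by
        rw [whisker_exchange_assoc]
    _ = μ ≫ leftMulTrace S A := by
        simp only [leftMulTrace]; monoidal

lemma leftMulTrace_eq_of_transport {Y : C} (A : Mon C) {u : 𝟙_ C ⟶ A.X ⊗ Y}
    {v : A.X ⊗ Y ⟶ 𝟙_ C} (f : Y ⟶ S.dual A.X) (hu : u ≫ (A.X ◁ f) = S.coev A.X)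
    (hv : (A.X ◁ f) ≫ S.ev' A.X = v) :
    leftMulTrace S A = (ρ_ A.X).inv ≫ (A.X ◁ u) ≫ (α_ A.X A.X Y).inv ≫ (μ ▷ Y) ≫ v := by
  calc leftMulTrace S A
      = (ρ_ A.X).inv ≫ (A.X ◁ u) ≫ (α_ A.X A.X Y).inv ≫ ((A.X ⊗ A.X) ◁ f) ≫
        (μ ▷ S.dual A.X) ≫ S.ev' A.X := by
        simp only [leftMulTrace, ← hu, MonoidalCategory.whiskerLeft_comp, Category.assoc]
        monoidal
    _ = (ρ_ A.X).inv ≫ (A.X ◁ u) ≫ (α_ A.X A.X Y).inv ≫ (μ ▷ Y) ≫ v := by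
        rw [whisker_exchange_assoc, hv]

lemma leftMulTrace_eq_counit (hFrob : IsFrobenius A Δ ε) (hSym : IsSymmetric S A ε)
    (hSpec : Δ ≫ μ = 𝟙 A.X) : leftMulTrace S A = ε := by
  have hu : (η ≫ Δ) ≫ (A.X ◁ snakeR (S.coev A.X) (μ ≫ ε)) = S.coev A.X := by
    rw [comp_whiskerLeft_snakeR, hFrob.snakeL_eq_id, id_whiskerRight, Category.comp_id]
  -- symmetry rewrites the transpose along the left duality, where `d̃_A` can absorb it
  have hv : (A.X ◁ snakeR (S.coev A.X) (μ ≫ ε)) ≫ S.ev' A.X = μ ≫ ε := by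
    rw [show snakeR (S.coev A.X) (μ ≫ ε) = snakeL (S.coev' A.X) (μ ≫ ε) from hSym,
      ← snakeR_whiskerRight_comp, show snakeR (S.coev' A.X) (S.ev' A.X) = 𝟙 A.X from S.zig' A.X,
      id_whiskerRight, Category.id_comp]
  rw [leftMulTrace_eq_of_transport S A _ hu hv]
  calc (ρ_ A.X).inv ≫ (A.X ◁ (η ≫ Δ)) ≫ (α_ A.X A.X A.X).inv ≫ (μ ▷ A.X) ≫ μ ≫ ε
      = (ρ_ A.X).inv ≫ (A.X ◁ (η ≫ Δ ≫ μ)) ≫ μ ≫ ε := by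
        simp only [MonObj.mul_assoc_flip_assoc, MonoidalCategory.whiskerLeft_comp, Category.assoc]
    _ = ε := by
        rw [hSpec, Category.comp_id, MonObj.mul_one_assoc, Iso.inv_hom_id_assoc]

/-- **Statement 2** (Lemma 2.3 (ii) of Kong–Runkel).
Let `A` be a symmetric Frobenius algebra in a sovereign tensor category `C` such that
`m ∘ Δ = id_A`.  Then `A` is a non-degenerate algebra, i.e. `Φ_A : A ⟶ A^∨` is invertible. -/
theorem symmetric_frobenius_nondegenerate
    {C : Type u} [Category.{v} C] [MonoidalCategory C] (S : Sovereign C)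
    (A : Mon C) (Δ : A.X ⟶ A.X ⊗ A.X) (ε : A.X ⟶ 𝟙_ C)
    (hFrob : IsFrobenius A Δ ε)
    (hSym : IsSymmetric S A ε)
    (hSpec : Δ ≫ MonObj.mul (X := A.X) = 𝟙 A.X) :
    Nondegenerate S A := by
  have hPhi : Phi S A = snakeR (S.coev A.X) (μ ≫ ε) := by
    rw [Phi_eq_snakeR, pairing_eq_mul_comp_leftMulTrace, leftMulTrace_eq_counit S hFrob hSym hSpec]
  rw [Nondegenerate, hPhi]
  exact isIso_snakeR (S.zig A.X) (S.zag A.X) hFrob.snakeL_eq_id hFrob.snakeR_eq_id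

end KR
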